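/- Let r = b − Ax with r ≠ 0 and define Ê = −(r rᵀ A)/‖r‖₂². Then (A + Ê)ᵀ r = 0, i.e., (A + Ê)ᵀ(A + Ê)x = (A + Ê)ᵀb, so x is an exact least squares solution of the perturbed problem with matrix A + Ê. -/

import Mathlib

/-!
`Êᵀ r = -Aᵀ r` because `(r rᵀ)ᵀ r = ‖r‖² r`, so `(A + Ê)ᵀ r = 0`. Moreover `Ê x` is a multiple
of `r`, hence so is the perturbed residual `b - (A + Ê) x`; being orthogonal to the columns of
`A + Ê`, so `x` satisfies the normal equations of the perturbed problem.
-/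

open Matrix

/-- The Euclidean (ℓ₂) norm of a real vector. -/
noncomputable def enorm₂ {m : ℕ} (v : Fin m → ℝ) : ℝ := ‖(WithLp.equiv 2 (Fin m → ℝ)).symm v‖

theorem enorm₂_sq {m : ℕ} (v : Fin m → ℝ) : enorm₂ v ^ 2 = v ⬝ᵥ v := by
  rw [enorm₂, EuclideanSpace.norm_eq, Real.sq_sqrt (by positivity)]
  simp [dotProduct, sq]

namespace Matrix

variable {K m n : Type*} [Fintype m]

theorem transpose_mul_mulVec_eq_of_residual_orthogonal [CommRing K] [Fintype n]
    {B : Matrix m n K} {x : n → K} {b : m → K} (h : Bᵀ *ᵥ (b - B *ᵥ x) = 0) :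
    (Bᵀ * B) *ᵥ x = Bᵀ *ᵥ b := by
  rwa [← mulVec_mulVec, eq_comm, ← sub_eq_zero, ← mulVec_sub]

section Field

variable [Field K]

-- At `r = 0` the junk value `0⁻¹ = 0` makes this the zero matrix.
def stewartPerturbation (A : Matrix m n K) (r : m → K) : Matrix m n K :=
  -((r ⬝ᵥ r)⁻¹ • vecMulVec r (r ᵥ* A))

theorem stewartPerturbation_mulVec [Fintype n] (A : Matrix m n K) (r : m → K) (x : n → K) :
    stewartPerturbation A r *ᵥ x = -((r ⬝ᵥ r)⁻¹ * ((r ᵥ* A) ⬝ᵥ x)) • r := by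
  rw [stewartPerturbation, neg_mulVec, smul_mulVec, vecMulVec_mulVec, op_smul_eq_smul, smul_smul,
    neg_smul]

theorem transpose_add_stewartPerturbation_mulVec [LinearOrder K] [IsStrictOrderedRing K]
    (A : Matrix m n K) (r : m → K) : (A + stewartPerturbation A r)ᵀ *ᵥ r = 0 := by
  rcases eq_or_ne r 0 with rfl | hr
  · exact mulVec_zero _
  have hrr : r ⬝ᵥ r ≠ 0 := fun h ↦ hr (dotProduct_self_eq_zero.mp h)
  rw [stewartPerturbation, transpose_add, add_mulVec, transpose_neg, transpose_smul,
    transpose_vecMulVec, neg_mulVec, smul_mulVec, vecMulVec_mulVec, op_smul_eq_smul, smul_smul,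
    inv_mul_cancel₀ hrr, one_smul, mulVec_transpose, add_neg_cancel]

end Field

end Matrix

theorem stmt14_general (m n : ℕ) (A : Matrix (Fin m) (Fin n) ℝ) (b : Fin m → ℝ)
    (x : Fin n → ℝ) (r : Fin m → ℝ) (hr : r = b - A.mulVec x)
    (E : Matrix (Fin m) (Fin n) ℝ)
    (hE : E = -((enorm₂ r ^ 2)⁻¹ • Matrix.vecMulVec r (A.vecMul r))) :
    (A + E)ᵀ.mulVec r = 0 ∧
      ((A + E)ᵀ * (A + E)).mulVec x = (A + E)ᵀ.mulVec b := by
  obtain rfl : E = stewartPerturbation A r := by rw [hE, enorm₂_sq, stewartPerturbation]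
  have hEr := transpose_add_stewartPerturbation_mulVec A r
  refine ⟨hEr, transpose_mul_mulVec_eq_of_residual_orthogonal ?_⟩
  obtain ⟨c, hc⟩ : ∃ c : ℝ, stewartPerturbation A r *ᵥ x = c • r :=
    ⟨_, stewartPerturbation_mulVec A r x⟩
  have hres : b - (A + stewartPerturbation A r) *ᵥ x = (1 - c) • r := by
    rw [add_mulVec, hc, sub_add_eq_sub_sub, ← hr, sub_smul, one_smul]
  rw [hres, mulVec_smul, hEr, smul_zero]

/-- For `r = b − Ax ≠ 0` and `Ê = −r rᵀ A/‖r‖₂²`, one has `(A + Ê)ᵀr = 0`, hence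
`(A + Ê)ᵀ(A + Ê)x = (A + Ê)ᵀb`: `x` is an exact least squares solution of the
perturbed problem. -/
theorem stmt14 (m n : ℕ) (A : Matrix (Fin m) (Fin n) ℝ) (b : Fin m → ℝ)
    (x : Fin n → ℝ) (r : Fin m → ℝ) (hr : r = b - A.mulVec x) (hr0 : r ≠ 0)
    (E : Matrix (Fin m) (Fin n) ℝ)
    (hE : E = -((enorm₂ r ^ 2)⁻¹ • Matrix.vecMulVec r (A.vecMul r))) :
    (A + E)ᵀ.mulVec r = 0 ∧
      ((A + E)ᵀ * (A + E)).mulVec x = (A + E)ᵀ.mulVec b :=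
  stmt14_general m n A b x r hr E hE
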